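/- Let v̲̲ ≤ v̄̄ be real numbers, k > 0, and ε > 0. The smooth deadband droop deviation D^ε(V) = (1/k)·(f^ε(v̲̲ − V) − f^ε(V − v̄̄)) approximates the nonsmooth deadband deviation D(V) = (1/k)·(max{0, v̲̲ − V} − max{0, V − v̄̄}) with error at most (ε·ln 2)/k: |D^ε(V) − D(V)| ≤ (ε·ln 2)/k for every real V. -/
import Mathlib


/-- The softplus function with sharpness `ε`. -/
noncomputable def softplus (ε x : ℝ) : ℝ := ε * Real.log (1 + Real.exp (x / ε))

lemma softplus_err (ε : ℝ) (hε : 0 < ε) (x : ℝ) :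
    max 0 x ≤ softplus ε x ∧ softplus ε x ≤ max 0 x + ε * Real.log 2 := by
  have hexp : 0 < Real.exp (x / ε) := Real.exp_pos _
  have h1 : (0:ℝ) < 1 + Real.exp (x / ε) := by linarith
  constructor
  · rw [max_le_iff]
    constructor
    · have : (0:ℝ) ≤ Real.log (1 + Real.exp (x / ε)) :=
        Real.log_nonneg (by linarith)
      exact mul_nonneg hε.le this
    · have : Real.log (Real.exp (x / ε)) ≤ Real.log (1 + Real.exp (x / ε)) :=
        Real.log_le_log hexp (by linarith)
      rw [Real.log_exp] at this
      calc x = ε * (x / ε) := by field_simp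
        _ ≤ ε * Real.log (1 + Real.exp (x / ε)) :=
          mul_le_mul_of_nonneg_left this hε.le
  · rcases le_total x 0 with hx | hx
    · rw [max_eq_left hx]
      have hle : Real.exp (x / ε) ≤ 1 := by
        rw [Real.exp_le_one_iff]
        exact div_nonpos_of_nonpos_of_nonneg hx hε.le
      have : Real.log (1 + Real.exp (x / ε)) ≤ Real.log 2 :=
        Real.log_le_log h1 (by linarith)
      unfold softplus
      nlinarith [mul_le_mul_of_nonneg_left this hε.le]
    · rw [max_eq_right hx]
      have hle : 1 + Real.exp (x / ε) ≤ 2 * Real.exp (x / ε) := by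
        have : (1:ℝ) ≤ Real.exp (x / ε) := by
          rw [Real.one_le_exp_iff]; positivity
        linarith
      have hlog : Real.log (1 + Real.exp (x / ε)) ≤ Real.log 2 + x / ε := by
        calc Real.log (1 + Real.exp (x / ε)) ≤ Real.log (2 * Real.exp (x / ε)) :=
            Real.log_le_log h1 hle
          _ = Real.log 2 + x / ε := by
            rw [Real.log_mul (by norm_num) hexp.ne', Real.log_exp]
      have := mul_le_mul_of_nonneg_left hlog hε.le
      have hx' : ε * (Real.log 2 + x / ε) = ε * Real.log 2 + x := by
        field_simp
      unfold softplus
      linarith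


/-- Let `v₂ ≤ v₃` (deadband limits), `k > 0` and `ε > 0`. The smooth deadband
droop deviation `D^ε(V) = (1/k)·(f^ε(v₂ − V) − f^ε(V − v₃))` approximates the
nonsmooth deviation `D(V) = (1/k)·(max{0, v₂ − V} − max{0, V − v₃})` with error
at most `(ε·ln 2)/k` for every real `V`. -/
theorem smooth_deadband_droop_error_bound (v₂ v₃ k ε : ℝ)
    (h₂₃ : v₂ ≤ v₃) (hk : 0 < k) (hε : 0 < ε) (V : ℝ) :
    |(1 / k) * (softplus ε (v₂ - V) - softplus ε (V - v₃))
        - (1 / k) * (max 0 (v₂ - V) - max 0 (V - v₃))| ≤ ε * Real.log 2 / k := by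
  obtain ⟨h1l, h1u⟩ := softplus_err ε hε (v₂ - V)
  obtain ⟨h2l, h2u⟩ := softplus_err ε hε (V - v₃)
  have hln2 : (0:ℝ) ≤ Real.log 2 := Real.log_nonneg (by norm_num)
  rw [← mul_sub, abs_mul, abs_of_pos (by positivity : (0:ℝ) < 1 / k)]
  have habs : |softplus ε (v₂ - V) - softplus ε (V - v₃)
      - (max 0 (v₂ - V) - max 0 (V - v₃))| ≤ ε * Real.log 2 := by
    rw [abs_le]; constructor <;> nlinarith
  calc 1 / k * |softplus ε (v₂ - V) - softplus ε (V - v₃)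
        - (max 0 (v₂ - V) - max 0 (V - v₃))|
      ≤ 1 / k * (ε * Real.log 2) :=
        mul_le_mul_of_nonneg_left habs (by positivity)
    _ = ε * Real.log 2 / k := by ring
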